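/- Let V be a compact manifold with nonempty boundary, with basepoint in ∂V, let p : DV → V be the folding map of the double DV = ∂(V × I) (given by p(v,0) = v, p(v,t) = v for v ∈ ∂V, p(v,1) = v), and let F be the homotopy fiber of the boundary inclusion ι : ∂V → V. Then the homotopy fiber P of p is homotopy equivalent to the suspension ΣF. -/

import Mathlib

/-!
Write `P` for the homotopy fibre of the fold map and `F` for that of the inclusion of `B = ∂V`.
A point of `P` is a path `γ` ending at `x₀` together with a time `t`, where `γ 0 ∈ B` unless
`t` is `0` or `1`; a point of `F` is such a path with `γ 0 ∈ B`.

The map `P → ΣF` collapses the times in `[0, 1/4]` and `[3/4, 1]` to the poles and in between,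
where `γ 0 ∈ B`, remembers `γ` as a point of `F`. The map `ΣF → P` keeps the path over the middle
times and towards the poles shrinks it onto its endpoint `x₀ ∈ B`, which makes it constant on
the poles. Up to a homotopy sliding the start of the path back to `γ 0`, both composites only
reparametrise the time by a map of `I` fixing `0` and `1`; such a map is homotopic to the
identity rel endpoints because `I` is contractible.
-/

open unitInterval Topology Topology.Homotopy Manifold ContinuousMap Function

noncomputable section

/-- The homotopy fibre of `p : E → B` over `b`. -/
abbrev HomotopyFiber {E B : Type*} [TopologicalSpace E] [TopologicalSpace B]
    (p : C(E, B)) (b : B) : Type _ :=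
  {q : E × C(I, B) // q.2 0 = p q.1 ∧ q.2 1 = b}

/-- The canonical basepoint of the homotopy fibre of a pointed map. -/
abbrev HomotopyFiber.basePoint {E B : Type*} [TopologicalSpace E] [TopologicalSpace B]
    (p : C(E, B)) {e : E} {b : B} (h : p e = b) : HomotopyFiber p b :=
  ⟨(e, ContinuousMap.const _ b), by simp [h], rfl⟩

/-- The (unreduced) suspension of a space. -/
abbrev Susp (X : Type*) [TopologicalSpace X] : Type _ :=
  Quot (fun a b : X × I => (a.2 = 0 ∧ b.2 = 0) ∨ (a.2 = 1 ∧ b.2 = 1))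

/-- The basepoint of the suspension determined by a point of `X`. -/
abbrev Susp.pt {X : Type*} [TopologicalSpace X] (x : X) : Susp X :=
  Quot.mk _ (x, 0)

/-- The double mapping cylinder (homotopy pushout) `X ∪_f (A × I) ∪_g Y`
of maps `f : A → X` and `g : A → Y`. -/
abbrev DoubleCyl {A X Y : Type*} [TopologicalSpace A] [TopologicalSpace X]
    [TopologicalSpace Y] (f : C(A, X)) (g : C(A, Y)) : Type _ :=
  Quot (fun p q : (X ⊕ (A × I)) ⊕ Y =>
    (∃ a, p = .inl (.inl (f a)) ∧ q = .inl (.inr (a, 0))) ∨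
    (∃ a, p = .inr (g a) ∧ q = .inl (.inr (a, 1))))
/-- The inclusion of the boundary of the manifold `V`, as a continuous map. -/
def bIncl (k : ℕ) [NeZero k] (V : Type*) [TopologicalSpace V]
    [ChartedSpace (EuclideanHalfSpace k) V] : C(((𝓡∂ k).boundary V : Set V), V) :=
  ⟨Subtype.val, continuous_subtype_val⟩

/-- The double `DV = ∂(V × I) = (V × {0}) ∪ (∂V × I) ∪ (V × {1})` of the manifold `V`,
as a subspace of `V × I`. -/
abbrev DoubleSp (k : ℕ) [NeZero k] (V : Type*) [TopologicalSpace V]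
    [ChartedSpace (EuclideanHalfSpace k) V] : Set (V × I) :=
  {p | p.2 = 0 ∨ p.2 = 1 ∨ p.1 ∈ (𝓡∂ k).boundary V}

/-- The folding map `p : DV → V`, given by `p(v,0) = v`, `p(v,t) = v` for `v ∈ ∂V`,
`p(v,1) = v`. -/
def foldMap (k : ℕ) [NeZero k] (V : Type*) [TopologicalSpace V]
    [ChartedSpace (EuclideanHalfSpace k) V] : C(DoubleSp k V, V) :=
  ⟨fun q => q.1.1, continuous_fst.comp continuous_subtype_val⟩

/-- The inclusion `i : DV = ∂(V × I) → V × I`. -/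
def dIncl (k : ℕ) [NeZero k] (V : Type*) [TopologicalSpace V]
    [ChartedSpace (EuclideanHalfSpace k) V] : C(DoubleSp k V, V × I) :=
  ⟨Subtype.val, continuous_subtype_val⟩

namespace unitInterval

def collapse : C(I, I) :=
  ⟨fun t => Set.projIcc 0 1 zero_le_one (2 * t - 1 / 2), by fun_prop⟩

def endWeight : C(I, I) :=
  ⟨fun t => Set.projIcc 0 1 zero_le_one (4 * |(t : ℝ) - 1 / 2| - 1), by fun_prop⟩

lemma collapse_of_le {t : I} (h : (t : ℝ) ≤ 1 / 4) : collapse t = 0 :=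
  Set.projIcc_of_le_left zero_le_one (by linarith)

lemma collapse_of_ge {t : I} (h : 3 / 4 ≤ (t : ℝ)) : collapse t = 1 :=
  Set.projIcc_of_right_le zero_le_one (by linarith)

lemma collapse_zero : collapse 0 = 0 := collapse_of_le (by norm_num)

lemma collapse_one : collapse 1 = 1 := collapse_of_ge (by norm_num)

lemma collapse_eq_zero_or_one {t : I} (h : 1 / 4 ≤ |(t : ℝ) - 1 / 2|) :
    collapse t = 0 ∨ collapse t = 1 := by
  rcases le_abs'.1 h with h | h
  · exact .inl (collapse_of_le (by linarith))
  · exact .inr (collapse_of_ge (by linarith))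

lemma endWeight_of_abs_le {t : I} (h : |(t : ℝ) - 1 / 2| ≤ 1 / 4) : endWeight t = 0 :=
  Set.projIcc_of_le_left zero_le_one (by linarith)

lemma endWeight_of_eq_zero_or_one {t : I} (h : t = 0 ∨ t = 1) : endWeight t = 1 :=
  Set.projIcc_of_right_le zero_le_one (by rcases h with rfl | rfl <;> norm_num)

lemma quarter_lt_abs_of_eq_zero_or_one {t : I} (h : t = 0 ∨ t = 1) :
    1 / 4 < |(t : ℝ) - 1 / 2| := by
  rcases h with rfl | rfl <;> norm_num

lemma path_homotopic (p q : Path (0 : I) 1) : p.Homotopic q :=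
  haveI : ContractibleSpace I := (convex_Icc (0 : ℝ) 1).contractibleSpace ⟨0, by simp⟩
  SimplyConnectedSpace.paths_homotopic p q

end unitInterval

namespace Susp

variable {X Y : Type*} [TopologicalSpace X] [TopologicalSpace Y]

abbrev mk (x : X) (t : I) : Susp X := Quot.mk _ (x, t)

lemma continuous_mk : Continuous fun p : X × I => mk p.1 p.2 := continuous_quot_mk

lemma mk_eq_mk_of_eq_zero_or_one {t : I} (h : t = 0 ∨ t = 1) (x y : X) : mk x t = mk y t := by
  rcases h with rfl | rfl
  exacts [Quot.sound (.inl ⟨rfl, rfl⟩), Quot.sound (.inr ⟨rfl, rfl⟩)]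

def lift (g : C(X × I, Y)) (h : ∀ x y t, t = 0 ∨ t = 1 → g (x, t) = g (y, t)) :
    C(Susp X, Y) :=
  ⟨Quot.lift g (by
      rintro ⟨x, s⟩ ⟨y, t⟩ (⟨rfl, rfl⟩ | ⟨rfl, rfl⟩)
      exacts [h x y 0 (.inl rfl), h x y 1 (.inr rfl)]),
    continuous_quot_lift _ g.continuous⟩

@[simp]
lemma lift_mk (g : C(X × I, Y)) (h : ∀ x y t, t = 0 ∨ t = 1 → g (x, t) = g (y, t)) (x : X)
    (t : I) : lift g h (mk x t) = g (x, t) := rfl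

def reparam (φ : C(I, I)) (h₀ : φ 0 = 0) (h₁ : φ 1 = 1) : C(Susp X, Susp X) :=
  lift ⟨fun p => mk p.1 (φ p.2), by fun_prop⟩ fun x y t ht =>
    mk_eq_mk_of_eq_zero_or_one (by rcases ht with rfl | rfl <;> simp [h₀, h₁]) x y

lemma reparam_homotopic_id (φ : C(I, I)) (h₀ : φ 0 = 0) (h₁ : φ 1 = 1) :
    (reparam (X := X) φ h₀ h₁).Homotopic (ContinuousMap.id _) := by
  obtain ⟨H⟩ := unitInterval.path_homotopic ⟨φ, h₀, h₁⟩ ⟨.id I, rfl, rfl⟩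
  let G : I × Susp X → Susp X := fun p =>
    reparam ⟨fun t => H (p.1, t), by fun_prop⟩ (H.source p.1) (H.target p.1) p.2
  refine ⟨⟨⟨G, isQuotientMap_quot_mk.continuous_lift_prod_right ?_⟩, ?_, ?_⟩⟩
  · exact continuous_mk.comp (f := fun p : I × (X × I) => (p.2.1, H (p.1, p.2.2)))
      (by fun_prop)
  all_goals
    rintro ⟨x, t⟩
    simp [G, reparam]

end Susp

namespace ContinuousMap

variable {X : Type*} [TopologicalSpace X]

def tailFrom (γ : C(I, X)) (w : I) : C(I, X) := γ.comp ⟨fun s => max w s, by fun_prop⟩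

lemma tailFrom_apply (γ : C(I, X)) (w s : I) : γ.tailFrom w s = γ (max w s) := rfl

@[simp]
lemma tailFrom_apply_one (γ : C(I, X)) (w : I) : γ.tailFrom w 1 = γ 1 := by
  simp [tailFrom_apply, le_one']

@[simp]
lemma tailFrom_apply_zero (γ : C(I, X)) (w : I) : γ.tailFrom w 0 = γ w := by
  simp [tailFrom_apply]

lemma tailFrom_zero (γ : C(I, X)) : γ.tailFrom 0 = γ := by ext; simp [tailFrom_apply]

lemma tailFrom_one (γ : C(I, X)) : γ.tailFrom 1 = ContinuousMap.const I (γ 1) := by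
  ext s; simp [tailFrom_apply, max_eq_left (le_one' (t := s))]

@[fun_prop]
lemma _root_.Continuous.tailFrom {Y : Type*} [TopologicalSpace Y] {γ : Y → C(I, X)}
    {w : Y → I} (hγ : Continuous γ) (hw : Continuous w) :
    Continuous fun y => (γ y).tailFrom (w y) :=
  continuous_of_continuous_uncurry _ (by simp only [tailFrom_apply]; fun_prop)

end ContinuousMap

section

variable {X : Type*} [TopologicalSpace X]

def doubleSet (B : Set X) : Set (X × I) := {p | p.2 = 0 ∨ p.2 = 1 ∨ p.1 ∈ B}

def doubleFold (B : Set X) : C(doubleSet B, X) := ⟨fun q => q.1.1, by fun_prop⟩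

abbrev FoldFiber (B : Set X) (x₀ : X) : Type _ := HomotopyFiber (doubleFold B) x₀

abbrev InclFiber (B : Set X) (x₀ : X) : Type _ :=
  HomotopyFiber ((ContinuousMap.id X).restrict B) x₀

end

namespace FoldFiber

variable {X : Type*} [TopologicalSpace X] {B : Set X} {x₀ : X}

def path (z : FoldFiber B x₀) : C(I, X) := z.1.2

def time (z : FoldFiber B x₀) : I := z.1.1.1.2

lemma time_eq_zero_or_one_or_mem (z : FoldFiber B x₀) :
    z.time = 0 ∨ z.time = 1 ∨ z.path 0 ∈ B :=
  z.2.1 ▸ z.1.1.2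

lemma path_zero_mem {z : FoldFiber B x₀} (h : ¬(z.time = 0 ∨ z.time = 1)) : z.path 0 ∈ B :=
  (or_assoc.2 z.time_eq_zero_or_one_or_mem).resolve_left h

@[simp]
lemma path_one (z : FoldFiber B x₀) : z.path 1 = x₀ := z.2.2

def mk (γ : C(I, X)) (t : I) (h : t = 0 ∨ t = 1 ∨ γ 0 ∈ B) (h₁ : γ 1 = x₀) :
    FoldFiber B x₀ :=
  ⟨(⟨(γ 0, t), h⟩, γ), rfl, h₁⟩

@[simp]
lemma path_mk (γ : C(I, X)) (t : I) (h : t = 0 ∨ t = 1 ∨ γ 0 ∈ B) (h₁ : γ 1 = x₀) :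
    (mk γ t h h₁).path = γ := rfl

@[simp]
lemma time_mk (γ : C(I, X)) (t : I) (h : t = 0 ∨ t = 1 ∨ γ 0 ∈ B) (h₁ : γ 1 = x₀) :
    (mk γ t h h₁).time = t := rfl

@[ext]
lemma ext {z z' : FoldFiber B x₀} (hp : z.path = z'.path) (ht : z.time = z'.time) : z = z' :=
  have hpt : z.1.1.1.1 = z'.1.1.1.1 := z.2.1.symm.trans ((congrArg (· 0) hp).trans z'.2.1)
  Subtype.ext (Prod.ext (Subtype.ext (Prod.ext hpt ht)) hp)

@[fun_prop]
lemma continuous_path : Continuous (path : FoldFiber B x₀ → C(I, X)) :=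
  continuous_snd.comp continuous_subtype_val

@[fun_prop]
lemma continuous_time : Continuous (time : FoldFiber B x₀ → I) :=
  continuous_snd.comp <|
    continuous_subtype_val.comp (continuous_fst.comp continuous_subtype_val)

lemma continuous_mk {Y : Type*} [TopologicalSpace Y] {γ : Y → C(I, X)} {t : Y → I}
    (hγ : Continuous γ) (ht : Continuous t) (h : ∀ y, t y = 0 ∨ t y = 1 ∨ γ y 0 ∈ B)
    (h₁ : ∀ y, γ y 1 = x₀) : Continuous fun y => mk (γ y) (t y) (h y) (h₁ y) :=
  ((((continuous_eval_const 0).comp hγ).prodMk ht).subtype_mk _ |>.prodMk hγ).subtype_mk _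

lemma apply_time_eq_zero_or_one_or_mem (z : FoldFiber B x₀) {φ : I → I} (h₀ : φ 0 = 0)
    (h₁ : φ 1 = 1) : φ z.time = 0 ∨ φ z.time = 1 ∨ z.path 0 ∈ B := by
  rcases z.time_eq_zero_or_one_or_mem with h | h | h <;> simp_all

def reparam (φ : C(I, I)) (h₀ : φ 0 = 0) (h₁ : φ 1 = 1) :
    C(FoldFiber B x₀, FoldFiber B x₀) :=
  ⟨fun z => mk z.path (φ z.time) (z.apply_time_eq_zero_or_one_or_mem h₀ h₁) z.path_one,
    continuous_mk (by fun_prop) (by fun_prop) _ _⟩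

lemma reparam_homotopic_id (φ : C(I, I)) (h₀ : φ 0 = 0) (h₁ : φ 1 = 1) :
    (reparam (B := B) (x₀ := x₀) φ h₀ h₁).Homotopic (ContinuousMap.id _) := by
  obtain ⟨H⟩ := unitInterval.path_homotopic ⟨φ, h₀, h₁⟩ ⟨.id I, rfl, rfl⟩
  let G : I × FoldFiber B x₀ → FoldFiber B x₀ := fun p =>
    reparam ⟨fun t => H (p.1, t), by fun_prop⟩ (H.source p.1) (H.target p.1) p.2
  have hG : Continuous G :=
    continuous_mk (t := fun p : I × FoldFiber B x₀ => H (p.1, p.2.time)) (by fun_prop)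
      (by fun_prop) (fun p => p.2.apply_time_eq_zero_or_one_or_mem
        (φ := fun t => H (p.1, t)) (H.source p.1) (H.target p.1)) (fun p => p.2.path_one)
  refine ⟨⟨⟨G, hG⟩, ?_, ?_⟩⟩ <;>
    intro z <;> ext <;> simp [G, reparam]

end FoldFiber

namespace InclFiber

variable {X : Type*} [TopologicalSpace X] {B : Set X} {x₀ : X}

def path (f : InclFiber B x₀) : C(I, X) := f.1.2

lemma path_zero_mem (f : InclFiber B x₀) : f.path 0 ∈ B := f.2.1 ▸ f.1.1.2

@[simp]
lemma path_one (f : InclFiber B x₀) : f.path 1 = x₀ := f.2.2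

def mk (γ : C(I, X)) (h₀ : γ 0 ∈ B) (h₁ : γ 1 = x₀) : InclFiber B x₀ :=
  ⟨(⟨γ 0, h₀⟩, γ), rfl, h₁⟩

@[simp]
lemma path_mk (γ : C(I, X)) (h₀ : γ 0 ∈ B) (h₁ : γ 1 = x₀) :
    (mk γ h₀ h₁).path = γ := rfl

@[ext]
lemma ext {f g : InclFiber B x₀} (h : f.path = g.path) : f = g := by
  have hpt : f.1.1 = g.1.1 := Subtype.ext (f.2.1.symm.trans ((congrArg (· 0) h).trans g.2.1))
  exact Subtype.ext (Prod.ext hpt h)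

@[fun_prop]
lemma continuous_path : Continuous (path : InclFiber B x₀ → C(I, X)) :=
  continuous_snd.comp continuous_subtype_val

lemma continuous_mk {Y : Type*} [TopologicalSpace Y] {γ : Y → C(I, X)} (hγ : Continuous γ)
    (h₀ : ∀ y, γ y 0 ∈ B) (h₁ : ∀ y, γ y 1 = x₀) :
    Continuous fun y => mk (γ y) (h₀ y) (h₁ y) :=
  ((((continuous_eval_const 0).comp hγ).subtype_mk _).prodMk hγ).subtype_mk _

end InclFiber

namespace FoldFiber

open unitInterval

variable {X : Type*} [TopologicalSpace X] {B : Set X} {x₀ : X}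

lemma collapse_eq_zero_or_one_or_mem (f : InclFiber B x₀) (t : I) :
    collapse t = 0 ∨ collapse t = 1 ∨ f.path.tailFrom (endWeight t) 0 ∈ B := by
  rcases le_or_gt (1 / 4) |(t : ℝ) - 1 / 2| with h | h
  · exact or_assoc.1 (.inl (collapse_eq_zero_or_one h))
  · simpa [endWeight_of_abs_le h.le] using .inr (.inr f.path_zero_mem)

def ofSusp : C(Susp (InclFiber B x₀), FoldFiber B x₀) :=
  Susp.lift ⟨fun p => mk (p.1.path.tailFrom (endWeight p.2)) (collapse p.2)
      (collapse_eq_zero_or_one_or_mem p.1 p.2) (by simp),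
    continuous_mk (by fun_prop) (by fun_prop) _ fun _ => by simp⟩
    fun f g t ht => by
      ext
      · simp [endWeight_of_eq_zero_or_one ht, tailFrom_one]
      · rfl

@[simp]
lemma ofSusp_mk_path (f : InclFiber B x₀) (t : I) :
    (ofSusp (Susp.mk f t)).path = f.path.tailFrom (endWeight t) := rfl

lemma path_zero_mem_of_abs_le {z : FoldFiber B x₀} (h : |(z.time : ℝ) - 1 / 2| ≤ 1 / 4) :
    z.path 0 ∈ B :=
  path_zero_mem fun h' => (quarter_lt_abs_of_eq_zero_or_one h').not_ge h

open Classical in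
/-- The base point is a junk value: it is only used where `toSusp` sends the time to a pole. -/
def toInclFiber (hx₀ : x₀ ∈ B) (z : FoldFiber B x₀) : InclFiber B x₀ :=
  if h : z.path 0 ∈ B then .mk z.path h z.path_one
  else HomotopyFiber.basePoint _ (e := ⟨x₀, hx₀⟩) rfl

lemma toInclFiber_path {hx₀ : x₀ ∈ B} {z : FoldFiber B x₀} (h : z.path 0 ∈ B) :
    (toInclFiber hx₀ z).path = z.path := by
  simp [toInclFiber, h]

lemma continuousOn_toInclFiber (hx₀ : x₀ ∈ B) :
    ContinuousOn (toInclFiber hx₀) {z | z.path 0 ∈ B} := by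
  rw [continuousOn_iff_continuous_domRestrict]
  refine (InclFiber.continuous_mk (γ := fun z : {z : FoldFiber B x₀ | z.path 0 ∈ B} =>
    z.1.path) (by fun_prop) (fun z => z.2) (fun z => z.1.path_one)).congr fun z => ?_
  exact (InclFiber.ext (toInclFiber_path z.2)).symm

def toSusp (hx₀ : x₀ ∈ B) : C(FoldFiber B x₀, Susp (InclFiber B x₀)) where
  toFun z := Susp.mk (toInclFiber hx₀ z) (collapse z.time)
  continuous_toFun := by
    have hmid (z : FoldFiber B x₀) (h : 1 / 4 ≤ |(z.time : ℝ) - 1 / 2|)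
        (f g : InclFiber B x₀) : Susp.mk f (collapse z.time) = Susp.mk g (collapse z.time) :=
      Susp.mk_eq_mk_of_eq_zero_or_one (collapse_eq_zero_or_one h) f g
    have hif : (fun z => Susp.mk (toInclFiber hx₀ z) (collapse z.time)) = fun z =>
        if |(z.time : ℝ) - 1 / 2| ≤ 1 / 4 then Susp.mk (toInclFiber hx₀ z) (collapse z.time)
        else
          Susp.mk (HomotopyFiber.basePoint _ (e := ⟨x₀, hx₀⟩) rfl) (collapse z.time) := by
      funext z
      split_ifs with h
      exacts [rfl, hmid z (not_le.1 h).le _ _]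
    rw [hif]
    refine continuous_if_le (by fun_prop) continuous_const ?_ (by fun_prop)
      fun z h => hmid z h.ge _ _
    exact Susp.continuous_mk.comp_continuousOn
      (((continuousOn_toInclFiber hx₀).mono fun _ => path_zero_mem_of_abs_le).prodMk
        (by fun_prop))

lemma toSusp_comp_ofSusp (hx₀ : x₀ ∈ B) :
    (toSusp hx₀).comp ofSusp =
      Susp.reparam (collapse.comp collapse) (by simp [collapse_zero])
        (by simp [collapse_one]) := by
  ext z
  induction z using Quot.ind with | _ p => ?_
  obtain ⟨f, t⟩ := p
  change Susp.mk (toInclFiber hx₀ (ofSusp (Susp.mk f t))) (collapse (collapse t)) =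
    Susp.mk f (collapse (collapse t))
  rcases le_or_gt |(t : ℝ) - 1 / 2| (1 / 4) with h | h
  · congr 1
    ext : 1
    rw [toInclFiber_path] <;> simp [endWeight_of_abs_le h, tailFrom_zero, f.path_zero_mem]
  · refine Susp.mk_eq_mk_of_eq_zero_or_one ?_ _ _
    rcases collapse_eq_zero_or_one h.le with h' | h' <;> simp [h', collapse_zero, collapse_one]

lemma ofSusp_toSusp_path (hx₀ : x₀ ∈ B) (z : FoldFiber B x₀) :
    (ofSusp (toSusp hx₀ z)).path = z.path.tailFrom (endWeight (collapse z.time)) := by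
  change (toInclFiber hx₀ z).path.tailFrom _ = _
  by_cases h : z.path 0 ∈ B
  · rw [toInclFiber_path h]
  · have ht : collapse z.time = 0 ∨ collapse z.time = 1 := by
      rcases (or_assoc.2 z.time_eq_zero_or_one_or_mem).resolve_right h with h' | h' <;>
        simp [h', collapse_zero, collapse_one]
    simp [endWeight_of_eq_zero_or_one ht, tailFrom_one]

lemma collapse_collapse_eq_zero_or_one_or_mem (z : FoldFiber B x₀) (s : I) :
    collapse (collapse z.time) = 0 ∨ collapse (collapse z.time) = 1 ∨
      z.path.tailFrom (min s (endWeight (collapse z.time))) 0 ∈ B := by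
  rcases le_or_gt (1 / 4) |(collapse z.time : ℝ) - 1 / 2| with h | h
  · exact or_assoc.1 (.inl (collapse_eq_zero_or_one h))
  · have hz : ¬(z.time = 0 ∨ z.time = 1) := by
      refine fun h' => (quarter_lt_abs_of_eq_zero_or_one ?_).not_ge h.le
      rcases h' with h' | h' <;> simp [h', collapse_zero, collapse_one]
    simpa [endWeight_of_abs_le h.le] using .inr (.inr (path_zero_mem hz))

lemma ofSusp_comp_toSusp_homotopic (hx₀ : x₀ ∈ B) :
    (ofSusp.comp (toSusp hx₀)).Homotopic
      (reparam (collapse.comp collapse) (by simp [collapse_zero]) (by simp [collapse_one])) := by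
  let G : I × FoldFiber B x₀ → FoldFiber B x₀ := fun p =>
    mk (p.2.path.tailFrom (min (σ p.1) (endWeight (collapse p.2.time))))
      (collapse (collapse p.2.time)) (p.2.collapse_collapse_eq_zero_or_one_or_mem _) (by simp)
  have hG : Continuous G := continuous_mk (by fun_prop) (by fun_prop) _ fun _ => by simp
  refine ⟨⟨⟨G, hG⟩, fun z => ?_, fun z => ?_⟩⟩ <;> ext : 1
  · simp [G, ofSusp_toSusp_path, le_one']
  · rfl
  · simp [G, reparam, tailFrom_zero]
  · rfl

def homotopyEquivSusp (hx₀ : x₀ ∈ B) : FoldFiber B x₀ ≃ₕ Susp (InclFiber B x₀) where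
  toFun := toSusp hx₀
  invFun := ofSusp
  left_inv := (ofSusp_comp_toSusp_homotopic hx₀).trans (reparam_homotopic_id _ _ _)
  right_inv := toSusp_comp_ofSusp hx₀ ▸ Susp.reparam_homotopic_id _ _ _

end FoldFiber

theorem homotopyFiber_foldMap_homotopyEquiv_susp_general
    (k : ℕ) [NeZero k] (V : Type*) [TopologicalSpace V]
    [ChartedSpace (EuclideanHalfSpace k) V]
    (v₀ : V) (hv₀ : v₀ ∈ (𝓡∂ k).boundary V) :
    Nonempty ((HomotopyFiber (foldMap k V) v₀) ≃ₕ Susp (HomotopyFiber (bIncl k V) v₀)) :=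
  ⟨FoldFiber.homotopyEquivSusp hv₀⟩

/-- for a compact manifold `V` with nonempty boundary and basepoint
`v₀ ∈ ∂V`, the homotopy fibre `P` of the folding map `p : DV → V` of the double is
homotopy equivalent to the suspension `ΣF` of the homotopy fibre `F` of the boundary
inclusion `∂V → V`. -/
theorem homotopyFiber_foldMap_homotopyEquiv_susp
    (k : ℕ) [NeZero k] (V : Type*) [TopologicalSpace V]
    [ChartedSpace (EuclideanHalfSpace k) V]
    [IsManifold (𝓡∂ k) (⊤ : ℕ∞) V] [CompactSpace V]
    (v₀ : V) (hv₀ : v₀ ∈ (𝓡∂ k).boundary V) :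
    Nonempty ((HomotopyFiber (foldMap k V) v₀) ≃ₕ Susp (HomotopyFiber (bIncl k V) v₀)) :=
  homotopyFiber_foldMap_homotopyEquiv_susp_general k V v₀ hv₀
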